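/- arXiv:2002.08045 — 2 statements merged into one kernel-verified Lean document; each statement's English description precedes it below -/
import Mathlib

section
/- Let 1 ≤ q < ∞ and −1/q ≤ λ < 0. For every f in the p-adic central Morrey space Ḃ^{q,λ}(Q_p^n), the p-adic Hardy operator satisfies ‖H^p f‖_{WḂ^{q,λ}(Q_p^n)} ≤ ‖f‖_{Ḃ^{q,λ}(Q_p^n)}, i.e., H^p is bounded from the central Morrey space to the weak central Morrey space with norm at most 1. -/
open MeasureTheory Metric Set
open scoped ENNReal NNReal

noncomputable instance (p : ℕ) [Fact p.Prime] : MeasurableSpace ℚ_[p] := borel _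
instance (p : ℕ) [Fact p.Prime] : BorelSpace ℚ_[p] := ⟨rfl⟩

/-- The closed unit ball of `ℚ_[p]^n` (with the sup norm) as a positive compact set. -/
noncomputable def unitBall (p : ℕ) [Fact p.Prime] (n : ℕ) :
    TopologicalSpace.PositiveCompacts (Fin n → ℚ_[p]) :=
  ⟨⟨closedBall 0 1, isCompact_closedBall 0 1⟩,
    ⟨0, ball_subset_interior_closedBall (mem_ball_self one_pos)⟩⟩

/-- The Haar measure on `ℚ_[p]^n`, normalized so that the unit ball has measure `1`. -/
noncomputable def μp (p : ℕ) [Fact p.Prime] (n : ℕ) : Measure (Fin n → ℚ_[p]) :=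
  Measure.addHaarMeasure (unitBall p n)

/-- The `p`-adic fractional Hardy operator
`H^p_α f(x) = |x|_p^{-(n-α)} ∫_{|y|_p ≤ |x|_p} f(y) dy` (real powers). -/
noncomputable def Hop (p : ℕ) [Fact p.Prime] (n : ℕ) (α : ℝ)
    (f : (Fin n → ℚ_[p]) → ℝ) (x : Fin n → ℚ_[p]) : ℝ :=
  ‖x‖ ^ (α - (n : ℝ)) * ∫ y in {y : Fin n → ℚ_[p] | ‖y‖ ≤ ‖x‖}, f y ∂(μp p n)

/-- The indicator function of the unit ball of `ℚ_[p]^n`. -/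
noncomputable def f₀ (p : ℕ) [Fact p.Prime] (n : ℕ) : (Fin n → ℚ_[p]) → ℝ :=
  Set.indicator {y : Fin n → ℚ_[p] | ‖y‖ ≤ 1} (fun _ => (1 : ℝ))

/-- The `p`-adic central Morrey norm `‖f‖_{Ḃ^{q,l}}`. -/
noncomputable def morrey (p : ℕ) [Fact p.Prime] (n : ℕ) (q l : ℝ)
    (f : (Fin n → ℚ_[p]) → ℝ) : ℝ≥0∞ :=
  ⨆ γ : ℤ, (ENNReal.ofReal (((p : ℝ) ^ ((n : ℝ) * (γ : ℝ))) ^ (-(1 + l * q))) *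
    ∫⁻ x in {x : Fin n → ℚ_[p] | ‖x‖ ≤ (p : ℝ) ^ γ},
      ENNReal.ofReal (|f x| ^ q) ∂(μp p n)) ^ (1 / q)

/-- The weak `p`-adic central Morrey norm `‖g‖_{WḂ^{q,l}}`. -/
noncomputable def wmorrey (p : ℕ) [Fact p.Prime] (n : ℕ) (q l : ℝ)
    (g : (Fin n → ℚ_[p]) → ℝ) : ℝ≥0∞ :=
  ⨆ γ : ℤ, ENNReal.ofReal (((p : ℝ) ^ ((n : ℝ) * (γ : ℝ))) ^ (-(l + 1 / q))) *
    ⨆ (t : ℝ) (_ : 0 < t), ENNReal.ofReal t *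
      (μp p n {x : Fin n → ℚ_[p] | ‖x‖ ≤ (p : ℝ) ^ γ ∧ t < |g x|}) ^ (1 / q)

set_option maxHeartbeats 1000000
set_option linter.unusedSectionVars false
set_option linter.unusedVariables false

section Aux

variable (p : ℕ) [Fact p.Prime] (n : ℕ)

def Bset (γ : ℤ) : Set (Fin n → ℚ_[p]) := {x | ‖x‖ ≤ (p : ℝ) ^ γ}

lemma Bset_eq (γ : ℤ) : Bset p n γ = closedBall 0 ((p:ℝ)^γ) := by
  ext x; simp [Bset, dist_eq_norm]

lemma Bset_meas (γ : ℤ) : MeasurableSet (Bset p n γ) := by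
  rw [Bset_eq]; exact measurableSet_closedBall

lemma μBzero : μp p n (Bset p n 0) = 1 := by
  have : Bset p n 0 = (unitBall p n : Set (Fin n → ℚ_[p])) := by
    simp [Bset_eq, unitBall]; rfl
  rw [this]; exact Measure.addHaarMeasure_self

noncomputable def scal : (Fin n → ℚ_[p]) ≃+ (Fin n → ℚ_[p]) :=
  DistribMulAction.toAddEquiv _ (Units.mk0 (p : ℚ_[p]) (by
    exact_mod_cast (Nat.cast_ne_zero (R := ℚ_[p])).2 (Fact.out : p.Prime).ne_zero))

lemma scal_apply (x : Fin n → ℚ_[p]) : scal p n x = (p : ℚ_[p]) • x := rfl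

lemma scal_cont : Continuous (scal p n) := by
  have : ⇑(scal p n) = fun x : Fin n → ℚ_[p] => (p : ℚ_[p]) • x := rfl
  rw [this]; exact continuous_const_smul _

lemma scal_symm_cont : Continuous (scal p n).symm := by
  have : ⇑(scal p n).symm = fun x => (Units.mk0 (p : ℚ_[p]) (by
    exact_mod_cast (Nat.cast_ne_zero (R := ℚ_[p])).2 (Fact.out : p.Prime).ne_zero))⁻¹ • x := rfl
  rw [this]; exact continuous_const_smul _

lemma map_scal_haar : (μp p n).map (scal p n) = ((μp p n).map (scal p n)) (unitBall p n) • μp p n := by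
  have h1 : (μp p n).IsAddHaarMeasure := Measure.isAddHaarMeasure_addHaarMeasure _
  have : (μp p n).map (scal p n) |>.IsAddHaarMeasure :=
    AddEquiv.isAddHaarMeasure_map _ (scal p n) (scal_cont p n) (scal_symm_cont p n)
  exact Measure.addHaarMeasure_unique _ (unitBall p n)

lemma scal_preimage (γ : ℤ) : ⇑(scal p n) ⁻¹' (Bset p n γ) = Bset p n (γ+1) := by
  ext x
  have hp1 : (1:ℝ) < p := by exact_mod_cast (Fact.out : p.Prime).one_lt
  have hp0 : (0:ℝ) < p := by linarith
  simp only [mem_preimage, Bset, mem_setOf_eq, scal_apply]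
  rw [norm_smul, Padic.norm_p]
  rw [inv_mul_le_iff₀ hp0, zpow_add₀ (ne_of_gt hp0), zpow_one]
  constructor
  · intro h; linarith [h]
  · intro h; linarith [h]

lemma μB_rec (γ : ℤ) : μp p n (Bset p n (γ+1)) = μp p n (Bset p n 1) * μp p n (Bset p n γ) := by
  have h1 : (μp p n).IsAddHaarMeasure := Measure.isAddHaarMeasure_addHaarMeasure _
  have hmap : ∀ γ' : ℤ, ((μp p n).map (scal p n)) (Bset p n γ') = μp p n (Bset p n (γ'+1)) := by
    intro γ'
    rw [Measure.map_apply (scal_cont p n).measurable (Bset_meas p n γ'), scal_preimage]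
  have key := map_scal_haar p n
  have hub : (unitBall p n : Set (Fin n → ℚ_[p])) = Bset p n 0 := by
    simp [Bset_eq, unitBall]; rfl
  have h0 : ((μp p n).map (scal p n)) (unitBall p n) = μp p n (Bset p n 1) := by
    rw [hub, hmap 0]; norm_num
  calc μp p n (Bset p n (γ+1)) = ((μp p n).map (scal p n)) (Bset p n γ) := (hmap γ).symm
    _ = μp p n (Bset p n 1) * μp p n (Bset p n γ) := by
        rw [key, h0]; rfl


-- exists rep
lemma exists_rep (p : ℕ) [Fact p.Prime] (x : ℚ_[p]) (hx : ‖x‖ ≤ p) :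
    ∃ a : Fin p, ‖x - (a : ℕ) * (p : ℚ_[p])⁻¹‖ ≤ 1 := by
  have hp1 : (1:ℝ) < p := by exact_mod_cast (Fact.out : p.Prime).one_lt
  have hp0 : (0:ℝ) < p := by linarith
  have hpq : ((p : ℚ_[p])) ≠ 0 := by
    exact_mod_cast (Nat.cast_ne_zero (R := ℚ_[p])).2 (Fact.out : p.Prime).ne_zero
  have hy : ‖(p : ℚ_[p]) * x‖ ≤ 1 := by
    rw [norm_mul, Padic.norm_p]
    calc (p:ℝ)⁻¹ * ‖x‖ ≤ (p:ℝ)⁻¹ * p := by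
          apply mul_le_mul_of_nonneg_left hx (by positivity)
      _ = 1 := inv_mul_cancel₀ (ne_of_gt hp0)
  set z : ℤ_[p] := ⟨(p : ℚ_[p]) * x, hy⟩ with hz
  have ha : z.appr 1 < p := by simpa using z.appr_lt 1
  refine ⟨⟨z.appr 1, ha⟩, ?_⟩
  have hspec := z.appr_spec 1
  rw [pow_one, Ideal.mem_span_singleton] at hspec
  obtain ⟨c, hc⟩ := hspec
  have hnorm : ‖z - (z.appr 1 : ℤ_[p])‖ ≤ (p:ℝ)⁻¹ := by
    rw [hc, norm_mul, PadicInt.norm_p]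
    calc (p:ℝ)⁻¹ * ‖c‖ ≤ (p:ℝ)⁻¹ * 1 := by
          apply mul_le_mul_of_nonneg_left c.2 (by positivity)
      _ = (p:ℝ)⁻¹ := mul_one _
  have hq : ‖((p:ℚ_[p]) * x - (z.appr 1 : ℚ_[p]))‖ ≤ (p:ℝ)⁻¹ := by
    have : ((z - (z.appr 1 : ℤ_[p]) : ℤ_[p]) : ℚ_[p]) = (p:ℚ_[p]) * x - (z.appr 1 : ℚ_[p]) := by
      rfl
    rw [← this]
    exact hnorm
  have key : x - (z.appr 1 : ℕ) * (p : ℚ_[p])⁻¹ = ((p:ℚ_[p]) * x - (z.appr 1 : ℚ_[p])) * (p:ℚ_[p])⁻¹ := by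
    field_simp
  rw [key, norm_mul, norm_inv, Padic.norm_p]
  rw [inv_inv]
  calc ‖(p:ℚ_[p]) * x - (z.appr 1 : ℚ_[p])‖ * p ≤ (p:ℝ)⁻¹ * p := by
        apply mul_le_mul_of_nonneg_right hq (le_of_lt hp0)
    _ = 1 := inv_mul_cancel₀ (ne_of_gt hp0)

lemma rep_far (p : ℕ) [Fact p.Prime] {a b : Fin p} (hab : a ≠ b) :
    ¬ (‖((a:ℕ) : ℚ_[p]) * (p:ℚ_[p])⁻¹ - ((b:ℕ):ℚ_[p]) * (p:ℚ_[p])⁻¹‖ ≤ 1) := by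
  have hp1 : (1:ℝ) < p := by exact_mod_cast (Fact.out : p.Prime).one_lt
  have hp0 : (0:ℝ) < p := by linarith
  have hint : ‖((((a:ℕ) : ℤ) - ((b:ℕ):ℤ) : ℤ) : ℚ_[p])‖ = 1 := by
    apply le_antisymm (Padic.norm_int_le_one _)
    by_contra h
    push_neg at h
    rw [Padic.norm_intCast_lt_one_iff] at h
    have hne : ((a:ℕ):ℤ) - ((b:ℕ):ℤ) ≠ 0 := by
      have : (a : ℕ) ≠ (b : ℕ) := fun hh => hab (Fin.ext hh)
      omega
    have habs : |((a:ℕ):ℤ) - ((b:ℕ):ℤ)| < p := by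
      have ha := a.2; have hb := b.2
      rw [abs_lt]; omega
    have := Int.le_of_dvd (abs_pos.2 hne) ((dvd_abs _ _).2 h)
    omega
  intro hle
  have heq : ((a:ℕ) : ℚ_[p]) * (p:ℚ_[p])⁻¹ - ((b:ℕ):ℚ_[p]) * (p:ℚ_[p])⁻¹
      = ((((a:ℕ) : ℤ) - ((b:ℕ):ℤ) : ℤ) : ℚ_[p]) * (p:ℚ_[p])⁻¹ := by
    push_cast; ring
  rw [heq, norm_mul, norm_inv, Padic.norm_p, inv_inv, hint, one_mul] at hle
  linarith

noncomputable def vec (v : Fin n → Fin p) : Fin n → ℚ_[p] :=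
  fun i => ((v i : ℕ) : ℚ_[p]) * (p:ℚ_[p])⁻¹

lemma mem_ball_iff (c x : Fin n → ℚ_[p]) :
    x ∈ closedBall c 1 ↔ ∀ i, ‖x i - c i‖ ≤ 1 := by
  rw [mem_closedBall, dist_eq_norm, pi_norm_le_iff_of_nonneg zero_le_one]
  simp [Pi.sub_apply]

lemma B1_decomp : Bset p n 1 = ⋃ v : Fin n → Fin p, closedBall (vec p n v) 1 := by
  have hp1 : (1:ℝ) < p := by exact_mod_cast (Fact.out : p.Prime).one_lt
  have hp0 : (0:ℝ) < p := by linarith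
  ext x
  simp only [Bset, mem_setOf_eq, mem_iUnion, zpow_one]
  constructor
  · intro hx
    have h : ∀ i, ∃ a : Fin p, ‖x i - ((a:ℕ):ℚ_[p]) * (p:ℚ_[p])⁻¹‖ ≤ 1 := fun i =>
      exists_rep p (x i) (le_trans (norm_le_pi_norm x i) hx)
    choose v hv using h
    exact ⟨v, (mem_ball_iff p n _ _).2 hv⟩
  · rintro ⟨v, hv⟩
    rw [mem_ball_iff] at hv
    rw [pi_norm_le_iff_of_nonneg (le_of_lt hp0)]
    intro i
    have h1 : ‖x i‖ ≤ max ‖x i - vec p n v i‖ ‖vec p n v i‖ := by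
      have := Padic.nonarchimedean (x i - vec p n v i) (vec p n v i)
      simpa using this
    have h2 : ‖vec p n v i‖ ≤ p := by
      show ‖((v i : ℕ) : ℚ_[p]) * (p:ℚ_[p])⁻¹‖ ≤ p
      rw [norm_mul, norm_inv, Padic.norm_p, inv_inv]
      calc ‖((v i : ℕ) : ℚ_[p])‖ * p ≤ 1 * p := by
            apply mul_le_mul_of_nonneg_right _ (le_of_lt hp0)
            exact_mod_cast Padic.norm_int_le_one ((v i : ℕ) : ℤ)
        _ = p := one_mul _
    exact le_trans h1 (max_le (le_trans (hv i) (le_of_lt hp1)) h2)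

lemma B1_disjoint : Pairwise (Function.onFun Disjoint (fun v : Fin n → Fin p => closedBall (vec p n v) 1)) := by
  intro v w hvw
  rw [Function.onFun, Set.disjoint_left]
  intro x hxv hxw
  obtain ⟨i, hi⟩ : ∃ i, v i ≠ w i := by
    by_contra h; push_neg at h; exact hvw (funext h)
  rw [mem_ball_iff] at hxv hxw
  apply rep_far p hi
  have heq : ((v i:ℕ) : ℚ_[p]) * (p:ℚ_[p])⁻¹ - ((w i:ℕ):ℚ_[p]) * (p:ℚ_[p])⁻¹
      = (x i - vec p n w i) - (x i - vec p n v i) := by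
    show _ = (x i - ((w i:ℕ):ℚ_[p]) * (p:ℚ_[p])⁻¹) - (x i - ((v i:ℕ):ℚ_[p]) * (p:ℚ_[p])⁻¹)
    ring
  rw [heq]
  have := Padic.nonarchimedean (x i - vec p n w i) (-(x i - vec p n v i))
  rw [← sub_eq_add_neg] at this
  refine le_trans this (max_le (hxw i) ?_)
  rw [norm_neg]; exact hxv i

lemma μ_transl (c : Fin n → ℚ_[p]) : μp p n (closedBall c 1) = μp p n (closedBall 0 1) := by
  haveI : (μp p n).IsAddLeftInvariant := Measure.isAddLeftInvariant_addHaarMeasure _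
  have : closedBall c 1 = (fun x => -c + x) ⁻¹' closedBall 0 1 := by
    ext x
    simp [mem_closedBall, dist_eq_norm, neg_add_eq_sub]
  rw [this, measure_preimage_add]

lemma μB1 : μp p n (Bset p n 1) = (p : ℝ≥0∞) ^ n := by
  have hcb : μp p n (closedBall (0 : Fin n → ℚ_[p]) 1) = 1 := Measure.addHaarMeasure_self
  rw [B1_decomp, measure_iUnion (B1_disjoint p n) (fun v => measurableSet_closedBall)]
  simp only [μ_transl, hcb]
  rw [tsum_eq_sum (s := Finset.univ) (by simp), Finset.sum_const]
  simp [Fintype.card_fun]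

lemma pn_ne_zero : ((p:ℝ≥0∞)^n) ≠ 0 := by
  have : (p:ℝ≥0∞) ≠ 0 := by exact_mod_cast (Fact.out : p.Prime).ne_zero
  positivity

lemma pn_ne_top : ((p:ℝ≥0∞)^n) ≠ ⊤ := by
  exact ENNReal.pow_ne_top (ENNReal.natCast_ne_top p)

lemma μB (γ : ℤ) : μp p n (Bset p n γ) = ((p:ℝ≥0∞)^n) ^ γ := by
  induction γ using Int.induction_on with
  | zero => simpa using μBzero p n
  | succ k ih =>
      rw [μB_rec, μB1, ih]
      rw [ENNReal.zpow_add (pn_ne_zero p n) (pn_ne_top p n) (k:ℤ) 1, zpow_one]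
      ring
  | pred k ih =>
      have h := μB_rec p n (-(k:ℤ)-1)
      rw [show (-(k:ℤ)-1) + 1 = -k by ring, μB1, ih] at h
      have hne := pn_ne_zero p n
      have hnt := pn_ne_top p n
      have heq : μp p n (Bset p n (-(k:ℤ)-1)) = ((p:ℝ≥0∞)^n)^(-(k:ℤ)) / ((p:ℝ≥0∞)^n) :=
        (ENNReal.eq_div_iff hne hnt).2 h.symm
      rw [heq, ENNReal.div_eq_inv_mul, ← zpow_neg_one, ← ENNReal.zpow_add hne hnt,
        show (-1 + -(k:ℤ)) = -(k:ℤ)-1 by ring]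

noncomputable def rp (γ : ℤ) : ℝ := (p : ℝ) ^ ((n : ℝ) * (γ : ℝ))

lemma rp_pos {γ : ℤ} : 0 < rp p n γ := by
  have hp0 : (0:ℝ) < p := by
    exact_mod_cast (Fact.out : p.Prime).pos
  exact Real.rpow_pos_of_pos hp0 _

lemma μB' (γ : ℤ) : μp p n (Bset p n γ) = ENNReal.ofReal (rp p n γ) := by
  have hp0 : (0:ℝ) < p := by exact_mod_cast (Fact.out : p.Prime).pos
  rw [μB, rp, ← ENNReal.ofReal_rpow_of_pos hp0, ENNReal.ofReal_natCast,
    ENNReal.rpow_mul, ENNReal.rpow_natCast, ENNReal.rpow_intCast]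
    

-- Hölder
lemma holder (q : ℝ) (hq : 1 ≤ q) (f : (Fin n → ℚ_[p]) → ℝ)
    (hf : AEStronglyMeasurable f (μp p n)) (s : Set (Fin n → ℚ_[p])) (hs : MeasurableSet s) :
    ∫⁻ x in s, ENNReal.ofReal ‖f x‖ ∂(μp p n) ≤
      (∫⁻ x in s, (ENNReal.ofReal ‖f x‖) ^ q ∂(μp p n)) ^ (1/q) * (μp p n s) ^ (1 - 1/q) := by
  rcases eq_or_lt_of_le hq with h1 | h1
  · subst h1
    simp
  · have hconj : q.HolderConjugate (q / (q - 1)) := .conjExponent h1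
    have hmeas : AEMeasurable (fun x => ENNReal.ofReal ‖f x‖) ((μp p n).restrict s) :=
      (ENNReal.measurable_ofReal.comp_aemeasurable
        (hf.norm.aemeasurable.restrict (s := s)))
    have := ENNReal.lintegral_mul_le_Lp_mul_Lq ((μp p n).restrict s) hconj hmeas
      aemeasurable_const (g := fun _ => (1:ℝ≥0∞))
    simp only [mul_one, ENNReal.one_rpow, lintegral_const, Measure.restrict_apply,
      MeasurableSet.univ, univ_inter, one_mul] at this
    calc ∫⁻ x in s, ENNReal.ofReal ‖f x‖ ∂(μp p n)
        ≤ (∫⁻ x in s, (ENNReal.ofReal ‖f x‖) ^ q ∂(μp p n)) ^ (1/q) *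
          ((μp p n) s) ^ (1 / (q / (q-1))) := by
            refine le_trans (le_of_eq ?_) this
            apply lintegral_congr; intro a; simp
      _ = _ := by
          congr 1
          congr 1
          rw [one_div_div]
          field_simp

lemma padic_exists_norm_eq {x : Fin n → ℚ_[p]} (hx : x ≠ 0) : ∃ k : ℤ, ‖x‖ = (p:ℝ) ^ k := by
  have hne : Nonempty (Fin n) := by
    rcases isEmpty_or_nonempty (Fin n) with h | h
    · exact absurd (funext fun i => h.elim i) hx
    · exact h
  have hnorm : ‖x‖ = ((Finset.univ.sup fun i => ‖x i‖₊ : ℝ≥0) : ℝ) := by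
    rw [Pi.norm_def]
  obtain ⟨i, _, hi⟩ := Finset.exists_mem_eq_sup Finset.univ Finset.univ_nonempty
    (fun i => ‖x i‖₊)
  rw [hnorm, hi]
  have hxi : x i ≠ 0 := by
    intro h0
    apply hx
    have hsup : ‖x‖ = 0 := by
      rw [hnorm, hi]; simp [h0]
    exact norm_eq_zero.1 hsup
  refine ⟨-(x i).valuation, ?_⟩
  have := Padic.norm_eq_zpow_neg_valuation hxi
  simpa using this

lemma ball_eq_Bset {x : Fin n → ℚ_[p]} {k : ℤ} (hk : ‖x‖ = (p:ℝ)^k) :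
    {y : Fin n → ℚ_[p] | ‖y‖ ≤ ‖x‖} = Bset p n k := by
  ext y; simp [Bset, hk]

lemma norm_zpow_le {j m : ℤ} (hjm : j ≤ m) : ((p:ℝ)^j ≤ (p:ℝ)^m) := by
  have hp1 : (1:ℝ) < p := by exact_mod_cast (Fact.out : p.Prime).one_lt
  exact zpow_le_zpow_right₀ (le_of_lt hp1) hjm

lemma small_ball (hn : 0 < n) {s : ℝ} (hs : 0 < s) :
    μp p n {x | ‖x‖ < s} ≤ ENNReal.ofReal (s ^ (n:ℝ)) := by
  have hp1 : (1:ℝ) < p := by exact_mod_cast (Fact.out : p.Prime).one_lt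
  have hp0 : (0:ℝ) < p := by linarith
  set L := Real.logb p s with hL
  set m : ℤ := ⌈L⌉ - 1 with hm
  have hsub : {x : Fin n → ℚ_[p] | ‖x‖ < s} ⊆ Bset p n m := by
    intro x hxs
    simp only [mem_setOf_eq] at hxs
    by_cases hx : x = 0
    · subst hx
      simp only [Bset, mem_setOf_eq, norm_zero]
      positivity
    · obtain ⟨j, hj⟩ := padic_exists_norm_eq p n hx
      have hjs : (p:ℝ)^j < s := hj ▸ hxs
      have hjL : (j:ℝ) < L := by
        rw [hL, Real.lt_logb_iff_rpow_lt hp1 hs, Real.rpow_intCast]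
        exact hjs
      have hjm : j ≤ m := by
        rw [hm]
        have : j < ⌈L⌉ := Int.lt_ceil.2 hjL
        omega
      simp only [Bset, mem_setOf_eq, hj]
      exact norm_zpow_le p hjm
  calc μp p n {x | ‖x‖ < s} ≤ μp p n (Bset p n m) := measure_mono hsub
    _ = ENNReal.ofReal (rp p n m) := μB' p n m
    _ ≤ ENNReal.ofReal (s ^ (n:ℝ)) := by
        apply ENNReal.ofReal_le_ofReal
        have hms : (p:ℝ)^((m:ℝ)) ≤ s := by
          have hmL : (m:ℝ) ≤ L := by
            have := Int.ceil_lt_add_one L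
            rw [hm]
            push_cast
            linarith
          calc (p:ℝ)^((m:ℝ)) ≤ (p:ℝ)^L := by
                apply Real.rpow_le_rpow_of_exponent_le (le_of_lt hp1) hmL
            _ = s := Real.rpow_logb hp0 (ne_of_gt hp1) hs
        rw [rp, mul_comm, Real.rpow_mul (le_of_lt hp0)]
        exact Real.rpow_le_rpow (Real.rpow_nonneg (le_of_lt hp0) _) hms (by positivity)

lemma pointwise_bound (hn : 0 < n) (q l : ℝ) (hq : 1 ≤ q)
    (f : (Fin n → ℚ_[p]) → ℝ) (hf : AEStronglyMeasurable f (μp p n))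
    (M : ℝ≥0∞) (hM : M ≠ ⊤)
    (hI : ∀ k : ℤ, ∫⁻ x in Bset p n k, ENNReal.ofReal (|f x| ^ q) ∂(μp p n) ≤
      M ^ q * (ENNReal.ofReal (rp p n k)) ^ (1 + l * q))
    {x : Fin n → ℚ_[p]} (hx : x ≠ 0) :
    |Hop p n 0 f x| ≤ M.toReal * ‖x‖ ^ ((n:ℝ) * l) := by
  have hp1 : (1:ℝ) < p := by exact_mod_cast (Fact.out : p.Prime).one_lt
  have hp0 : (0:ℝ) < p := by linarith
  have hq0 : 0 < q := lt_of_lt_of_le one_pos hq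
  obtain ⟨k, hk⟩ := padic_exists_norm_eq p n hx
  set e : ℝ≥0∞ := ENNReal.ofReal (rp p n k) with he
  have he0 : e ≠ 0 := by
    rw [he]; simp [ENNReal.ofReal_eq_zero, not_le, rp_pos p n]
  have het : e ≠ ⊤ := ENNReal.ofReal_ne_top
  have heR : ∀ y : ℝ, e ^ y = ENNReal.ofReal ((rp p n k) ^ y) := fun y => by
    rw [he, ENNReal.ofReal_rpow_of_pos (rp_pos p n)]
  -- the lintegral bound
  have key : ∫⁻ y in Bset p n k, ENNReal.ofReal ‖f y‖ ∂(μp p n) ≤ M * e ^ (1 + l) := by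
    have h1 := holder p n q hq f hf (Bset p n k) (Bset_meas p n k)
    have heq : ∀ y, (ENNReal.ofReal ‖f y‖) ^ q = ENNReal.ofReal (|f y| ^ q) := by
      intro y
      rw [Real.norm_eq_abs, ← ENNReal.ofReal_rpow_of_nonneg (abs_nonneg _) (le_of_lt hq0)]
    calc ∫⁻ y in Bset p n k, ENNReal.ofReal ‖f y‖ ∂(μp p n)
        ≤ (∫⁻ y in Bset p n k, (ENNReal.ofReal ‖f y‖) ^ q ∂(μp p n)) ^ (1/q) *
          (μp p n (Bset p n k)) ^ (1 - 1/q) := h1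
      _ = (∫⁻ y in Bset p n k, ENNReal.ofReal (|f y| ^ q) ∂(μp p n)) ^ (1/q) * e ^ (1 - 1/q) := by
          rw [μB' p n k, ← he]
          congr 2
          exact lintegral_congr fun y => heq y
      _ ≤ (M ^ q * e ^ (1 + l * q)) ^ (1/q) * e ^ (1 - 1/q) := by
          apply mul_le_mul_left
          exact ENNReal.rpow_le_rpow (hI k) (by positivity)

      _ = M * e ^ (1 + l) := by
          rw [ENNReal.mul_rpow_of_ne_top (ENNReal.rpow_ne_top_of_nonneg (le_of_lt hq0) hM)
            (by rw [heR]; exact ENNReal.ofReal_ne_top)]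
          rw [← ENNReal.rpow_mul, ← ENNReal.rpow_mul, mul_one_div, div_self (ne_of_gt hq0),
            ENNReal.rpow_one, mul_assoc, ← ENNReal.rpow_add _ _ he0 het]
          congr 2
          field_simp
          ring
  -- Hop bound
  have hMe : M * e ^ (1 + l) ≠ ⊤ :=
    ENNReal.mul_ne_top hM (by rw [heR]; exact ENNReal.ofReal_ne_top)
  have hxp : ‖x‖ = (p:ℝ) ^ ((k:ℝ)) := by rw [hk, Real.rpow_intCast]
  calc |Hop p n 0 f x| = ‖x‖ ^ ((0:ℝ) - n) * |∫ y in Bset p n k, f y ∂μp p n| := by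
        rw [Hop, abs_mul, abs_of_nonneg (Real.rpow_nonneg (norm_nonneg x) _),
          ball_eq_Bset p n hk]
    _ ≤ ‖x‖ ^ ((0:ℝ) - n) * (M.toReal * (rp p n k) ^ (1+l)) := by
        apply mul_le_mul_of_nonneg_left _ (Real.rpow_nonneg (norm_nonneg x) _)
        calc |∫ y in Bset p n k, f y ∂μp p n|
            ≤ (∫⁻ y in Bset p n k, ENNReal.ofReal ‖f y‖ ∂μp p n).toReal := by
              rw [← Real.norm_eq_abs]
              exact norm_integral_le_lintegral_norm _
          _ ≤ (M * e ^ (1+l)).toReal := ENNReal.toReal_mono hMe key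
          _ = M.toReal * (rp p n k) ^ (1+l) := by
              rw [ENNReal.toReal_mul, heR,
                ENNReal.toReal_ofReal (Real.rpow_nonneg (le_of_lt (rp_pos p n)) _)]
    _ = M.toReal * ‖x‖ ^ ((n:ℝ) * l) := by
        rw [hxp, rp, ← Real.rpow_mul (le_of_lt hp0), ← Real.rpow_mul (le_of_lt hp0),
          ← Real.rpow_mul (le_of_lt hp0),
          show ∀ a b c : ℝ, a * (b * c) = b * (a * c) from fun a b c => by ring,
          ← Real.rpow_add hp0]
        congr 2
        ring

end Aux

/-- Boundedness of the `p`-adic Hardy operator from the central Morrey space to the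
weak central Morrey space, with norm at most `1`:
`‖H^p f‖_{WḂ^{q,λ}} ≤ ‖f‖_{Ḃ^{q,λ}}`. -/
theorem hardy_morrey_bound (p : ℕ) [Fact p.Prime] (n : ℕ) (hn : 0 < n)
    (q l : ℝ) (hq : 1 ≤ q) (hl1 : -(1 / q) ≤ l) (hl2 : l < 0)
    (f : (Fin n → ℚ_[p]) → ℝ) (hf : AEStronglyMeasurable f (μp p n))
    (hfB : morrey p n q l f ≠ ⊤) :
    wmorrey p n q l (Hop p n 0 f) ≤ morrey p n q l f := by
  have hp1 : (1:ℝ) < p := by exact_mod_cast (Fact.out : p.Prime).one_lt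
  have hp0 : (0:ℝ) < p := by linarith
  have hq0 : (0:ℝ) < q := lt_of_lt_of_le one_pos hq
  have hq0' : q ≠ 0 := ne_of_gt hq0
  have h1q : (0:ℝ) < 1/q := by positivity
  have hn0 : ((n:ℝ)) ≠ 0 := by exact_mod_cast hn.ne'
  have hl0 : l ≠ 0 := ne_of_lt hl2
  set M := morrey p n q l f with hMdef
  have hMt : M ≠ ⊤ := hfB
  -- extraction of the Morrey bound
  have hI : ∀ k : ℤ, ∫⁻ x in Bset p n k, ENNReal.ofReal (|f x| ^ q) ∂(μp p n) ≤
      M ^ q * (ENNReal.ofReal (rp p n k)) ^ (1 + l * q) := by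
    intro k
    set I := ∫⁻ x in Bset p n k, ENNReal.ofReal (|f x| ^ q) ∂(μp p n) with hIdef
    have h0 : (ENNReal.ofReal ((rp p n k) ^ (-(1 + l * q))) * I) ^ (1/q) ≤ M := by
      rw [hMdef, morrey]
      exact le_iSup (fun γ : ℤ => (ENNReal.ofReal (((p : ℝ) ^ ((n : ℝ) * (γ : ℝ))) ^ (-(1 + l * q))) *
        ∫⁻ x in {x : Fin n → ℚ_[p] | ‖x‖ ≤ (p : ℝ) ^ γ},
          ENNReal.ofReal (|f x| ^ q) ∂(μp p n)) ^ (1 / q)) k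
    have h0' : ENNReal.ofReal ((rp p n k) ^ (-(1 + l * q))) * I ≤ M ^ q := by
      have h2 := ENNReal.rpow_le_rpow h0 (le_of_lt hq0)
      rwa [← ENNReal.rpow_mul, one_div_mul_cancel hq0', ENNReal.rpow_one] at h2
    have hc : ENNReal.ofReal ((rp p n k) ^ (-(1 + l * q)))
        = (ENNReal.ofReal (rp p n k)) ^ (-(1 + l * q)) :=
      (ENNReal.ofReal_rpow_of_pos (rp_pos p n)).symm
    have he0 : ENNReal.ofReal (rp p n k) ≠ 0 := by
      simp [ENNReal.ofReal_eq_zero, not_le, rp_pos p n]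
    have het : ENNReal.ofReal (rp p n k) ≠ ⊤ := ENNReal.ofReal_ne_top
    calc I = (ENNReal.ofReal (rp p n k)) ^ (1 + l * q) *
          ((ENNReal.ofReal (rp p n k)) ^ (-(1 + l * q)) * I) := by
          rw [← mul_assoc, ← ENNReal.rpow_add _ _ he0 het,
            show (1 + l * q) + -(1 + l * q) = 0 by ring, ENNReal.rpow_zero, one_mul]
      _ ≤ (ENNReal.ofReal (rp p n k)) ^ (1 + l * q) * M ^ q := by
          apply mul_le_mul_right
          rw [← hc]; exact h0'
      _ = M ^ q * (ENNReal.ofReal (rp p n k)) ^ (1 + l * q) := mul_comm _ _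
  have hpt : ∀ x : Fin n → ℚ_[p], x ≠ 0 →
      |Hop p n 0 f x| ≤ M.toReal * ‖x‖ ^ ((n:ℝ)*l) :=
    fun x hx => pointwise_bound p n hn q l hq f hf M hMt hI hx
  -- main bound
  rw [wmorrey]
  apply iSup_le; intro γ
  rw [ENNReal.mul_iSup]
  apply iSup_le; intro t
  rw [ENNReal.mul_iSup]
  apply iSup_le; intro ht
  have hrg0 : (0:ℝ) < rp p n γ := rp_pos p n
  set E := {x : Fin n → ℚ_[p] | ‖x‖ ≤ (p:ℝ)^γ ∧ t < |Hop p n 0 f x|} with hEdef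
  show ENNReal.ofReal ((rp p n γ) ^ (-(l + 1/q))) *
    (ENNReal.ofReal t * (μp p n E) ^ (1/q)) ≤ M
  have ha0 : (0:ℝ) ≤ (rp p n γ) ^ (-(l + 1/q)) :=
    le_of_lt (Real.rpow_pos_of_pos hrg0 _)
  have hEB : E ⊆ Bset p n γ := fun x hx => hx.1
  have hEP : ∀ x ∈ E, x ≠ 0 ∧ t < M.toReal * ‖x‖ ^ ((n:ℝ)*l) := by
    intro x hx
    have hx0 : x ≠ 0 := by
      rintro rfl
      have hzero : Hop p n 0 f 0 = 0 := by
        rw [Hop, norm_zero, Real.zero_rpow, zero_mul]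
        intro hcon
        rw [sub_eq_zero] at hcon
        exact hn0 (by exact_mod_cast hcon.symm)
      have h2 := hx.2
      rw [hzero, abs_zero] at h2
      linarith
    exact ⟨hx0, lt_of_lt_of_le hx.2 (hpt x hx0)⟩
  -- case split
  rcases le_or_gt t (M.toReal * (rp p n γ) ^ l) with hcase | hcase
  · -- easy case : use the full ball
    have hμ : (μp p n E) ^ (1/q) ≤ ENNReal.ofReal ((rp p n γ) ^ (1/q)) := by
      rw [← ENNReal.ofReal_rpow_of_pos hrg0]
      apply ENNReal.rpow_le_rpow _ (le_of_lt h1q)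
      rw [← μB' p n γ]
      exact measure_mono hEB
    calc ENNReal.ofReal ((rp p n γ) ^ (-(l + 1/q))) *
        (ENNReal.ofReal t * (μp p n E) ^ (1/q))
        ≤ ENNReal.ofReal ((rp p n γ) ^ (-(l + 1/q))) *
          (ENNReal.ofReal t * ENNReal.ofReal ((rp p n γ) ^ (1/q))) := by
          exact mul_le_mul_right (mul_le_mul_right hμ _) _
      _ = ENNReal.ofReal ((rp p n γ) ^ (-(l + 1/q)) * (t * (rp p n γ) ^ (1/q))) := by
          rw [ENNReal.ofReal_mul ha0, ENNReal.ofReal_mul (le_of_lt ht)]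
      _ ≤ ENNReal.ofReal M.toReal := by
          apply ENNReal.ofReal_le_ofReal
          calc (rp p n γ) ^ (-(l + 1/q)) * (t * (rp p n γ) ^ (1/q))
              ≤ (rp p n γ) ^ (-(l + 1/q)) * ((M.toReal * (rp p n γ) ^ l) * (rp p n γ) ^ (1/q)) := by
                apply mul_le_mul_of_nonneg_left _ ha0
                apply mul_le_mul_of_nonneg_right hcase
                  (le_of_lt (Real.rpow_pos_of_pos hrg0 _))
            _ = M.toReal * ((rp p n γ) ^ (-(l + 1/q)) * (rp p n γ) ^ l * (rp p n γ) ^ (1/q)) := by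
                ring
            _ = M.toReal := by
                rw [← Real.rpow_add hrg0, ← Real.rpow_add hrg0,
                  show -(l + 1/q) + l + 1/q = 0 by ring, Real.rpow_zero, mul_one]
      _ = M := ENNReal.ofReal_toReal hMt
  · -- hard case
    rcases eq_or_lt_of_le (ENNReal.toReal_nonneg : (0:ℝ) ≤ M.toReal) with hM0 | hM0
    · -- M = 0 : E is empty
      have hEe : E = ∅ := by
        ext x
        simp only [mem_empty_iff_false, iff_false]
        intro hx
        have h2 := (hEP x hx).2
        rw [← hM0, zero_mul] at h2
        linarith
      rw [hEe, measure_empty, ENNReal.zero_rpow_of_pos h1q, mul_zero, mul_zero]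
      exact zero_le
    · set u := t / M.toReal with hudef
      have hu0 : 0 < u := div_pos ht hM0
      have hnl : ((n:ℝ)*l) < 0 := mul_neg_of_pos_of_neg (by exact_mod_cast hn) hl2
      set s := u ^ (1/((n:ℝ)*l)) with hsdef
      have hs0 : 0 < s := Real.rpow_pos_of_pos hu0 _
      have hEsub : E ⊆ {x | ‖x‖ < s} := by
        intro x hx
        obtain ⟨hx0, hxt⟩ := hEP x hx
        have hxn0 : 0 < ‖x‖ := norm_pos_iff.2 hx0
        have h2 : u < ‖x‖ ^ ((n:ℝ)*l) := by
          rw [hudef, div_lt_iff₀ hM0, mul_comm]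
          exact hxt
        simp only [mem_setOf_eq]
        by_contra hcon
        push_neg at hcon
        have h3 : ‖x‖ ^ ((n:ℝ)*l) ≤ s ^ ((n:ℝ)*l) :=
          Real.rpow_le_rpow_of_nonpos hs0 hcon (le_of_lt hnl)
        have hss : s ^ ((n:ℝ)*l) = u := by
          rw [hsdef, ← Real.rpow_mul (le_of_lt hu0),
            one_div_mul_cancel (ne_of_lt hnl), Real.rpow_one]
        rw [hss] at h3
        linarith
      have hul0 : (0:ℝ) < u ^ (1/l) := Real.rpow_pos_of_pos hu0 _
      have hμ : μp p n E ≤ ENNReal.ofReal (u ^ (1/l)) := by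
        refine le_trans (measure_mono hEsub) (le_trans (small_ball p n hn hs0) ?_)
        apply le_of_eq
        congr 1
        rw [hsdef, ← Real.rpow_mul (le_of_lt hu0)]
        congr 1
        field_simp
      -- final computation
      have hβ : 1 + (1/l)*(1/q) ≤ 0 := by
        have hlq : l * q < 0 := mul_neg_of_neg_of_pos hl2 hq0
        have hlq1 : -1 ≤ l * q := by
          have := mul_le_mul_of_nonneg_right hl1 (le_of_lt hq0)
          rw [neg_mul, div_mul_cancel₀ _ hq0'] at this
          linarith
        have h4 : (1:ℝ)/(l*q) ≤ -1 := by
          rw [div_le_iff_of_neg hlq]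
          linarith
        have h5 : (1/l)*(1/q) = 1/(l*q) := by
          field_simp
        rw [h5]
        linarith
      have hu_ge : (rp p n γ) ^ l < u := by
        rw [hudef, lt_div_iff₀ hM0, mul_comm]
        exact hcase
      calc ENNReal.ofReal ((rp p n γ) ^ (-(l + 1/q))) *
          (ENNReal.ofReal t * (μp p n E) ^ (1/q))
          ≤ ENNReal.ofReal ((rp p n γ) ^ (-(l + 1/q))) *
            (ENNReal.ofReal t * ENNReal.ofReal ((u ^ (1/l)) ^ (1/q))) := by
            apply mul_le_mul_right
            apply mul_le_mul_right
            rw [← ENNReal.ofReal_rpow_of_pos hul0]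
            exact ENNReal.rpow_le_rpow hμ (le_of_lt h1q)
        _ = ENNReal.ofReal ((rp p n γ) ^ (-(l + 1/q)) * (t * (u ^ (1/l)) ^ (1/q))) := by
            rw [ENNReal.ofReal_mul ha0, ENNReal.ofReal_mul (le_of_lt ht)]
        _ ≤ ENNReal.ofReal M.toReal := by
            apply ENNReal.ofReal_le_ofReal
            have ht_eq : t = M.toReal * u := by
              rw [hudef]
              field_simp
            have huq : (u ^ (1/l)) ^ (1/q) = u ^ ((1/l)*(1/q)) :=
              (Real.rpow_mul (le_of_lt hu0) _ _).symm
            have hkey : u * u ^ ((1/l)*(1/q)) = u ^ (1 + (1/l)*(1/q)) := by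
              rw [Real.rpow_add hu0, Real.rpow_one]
            calc (rp p n γ) ^ (-(l + 1/q)) * (t * (u ^ (1/l)) ^ (1/q))
                = M.toReal * ((rp p n γ) ^ (-(l + 1/q)) * u ^ (1 + (1/l)*(1/q))) := by
                  rw [huq, ht_eq]
                  rw [show M.toReal * u * u ^ ((1/l)*(1/q)) = M.toReal * (u * u ^ ((1/l)*(1/q))) by ring,
                    hkey]
                  ring
              _ ≤ M.toReal * ((rp p n γ) ^ (-(l + 1/q)) * ((rp p n γ) ^ l) ^ (1 + (1/l)*(1/q))) := by
                  apply mul_le_mul_of_nonneg_left _ (le_of_lt hM0)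
                  apply mul_le_mul_of_nonneg_left _ ha0
                  exact Real.rpow_le_rpow_of_nonpos
                    (Real.rpow_pos_of_pos hrg0 l) (le_of_lt hu_ge) hβ
              _ = M.toReal := by
                  rw [← Real.rpow_mul (le_of_lt hrg0), ← Real.rpow_add hrg0,
                    show -(l + 1/q) + l * (1 + (1/l)*(1/q)) = 0 by field_simp; ring,
                    Real.rpow_zero, mul_one]
        _ = M := ENNReal.ofReal_toReal hMt
end

section
/- Let 1 ≤ q < ∞ and −1/q ≤ λ < 0, and let f_0 = χ_{B_0} in Q_p^n. Then ‖H^p f_0‖_{WḂ^{q,λ}(Q_p^n)} = 1 = ‖f_0‖_{Ḃ^{q,λ}(Q_p^n)}; consequently the operator norm of the p-adic Hardy operator H^p from Ḃ^{q,λ}(Q_p^n) to WḂ^{q,λ}(Q_p^n) is exactly 1. -/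
open MeasureTheory Metric Set
open scoped ENNReal NNReal

/-! The ball `‖x‖ ≤ p ^ γ` is the disjoint union of `p ^ n` translates of the ball of radius
`p ^ (γ - 1)`, one for each vector of leading `p`-adic digits, so its Haar measure is `(p ^ γ) ^ n`.
Hence `H^p f₀ x = (max ‖x‖ 1) ^ (-n)` for `x ≠ 0`: the level set `{t < |H^p f₀|}` of `B_γ` is empty
for `t ≥ 1` and otherwise lies in `B_γ` and in the ball of radius `t ^ (-1/n)`, so its measure `m`
is at most `min |B_γ| t⁻¹` and `t m ^ (1/q) ≤ t ^ (1 + λ) |B_γ| ^ (λ + 1/q) ≤ |B_γ| ^ (λ + 1/q)`.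
Conversely `H^p f₀ = 1` on `B_0 \ {0}`, which gives the value `1` at `γ = 0`. The Morrey norm of
`f₀` is handled the same way, with `|B_γ ∩ B_0| = min |B_γ| 1`. -/

open scoped Pointwise

variable {p : ℕ} [Fact p.Prime]

lemma one_lt_natCast_prime : (1 : ℝ) < p := by exact_mod_cast (Fact.out : p.Prime).one_lt

lemma natCast_prime_pos : (0 : ℝ) < p := zero_lt_one.trans one_lt_natCast_prime

namespace Padic

theorem exists_fin_norm_sub_lt_one {x : ℚ_[p]} (hx : ‖x‖ ≤ 1) :
    ∃ a : Fin p, ‖x - (a : ℕ)‖ < 1 := by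
  let y : ℤ_[p] := ⟨x, hx⟩
  refine ⟨⟨y.zmodRepr, y.zmodRepr_lt_p⟩, ?_⟩
  have := PadicInt.mem_nonunits.1 ((IsLocalRing.mem_maximalIdeal _).1 y.sub_zmodRepr_mem)
  rwa [PadicInt.norm_def, PadicInt.coe_sub, PadicInt.coe_natCast] at this

theorem eq_of_norm_natCast_sub_lt_one {a b : Fin p} (h : ‖((a : ℕ) : ℚ_[p]) - (b : ℕ)‖ < 1) :
    a = b := by
  have hdvd : (p : ℤ) ∣ (a : ℕ) - (b : ℕ) := Padic.norm_intCast_lt_one_iff.1 (by simpa using h)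
  have := Int.eq_zero_of_abs_lt_dvd hdvd (abs_lt.2 ⟨by omega, by omega⟩)
  exact Fin.ext (by omega)

variable {ι : Type*} [Fintype ι]

theorem pi_norm_le_zpow_iff_lt (x : ι → ℚ_[p]) (β : ℤ) :
    ‖x‖ ≤ (p : ℝ) ^ β ↔ ‖x‖ < (p : ℝ) ^ (β + 1) := by
  rw [pi_norm_le_iff_of_nonneg (zpow_pos natCast_prime_pos β).le,
    pi_norm_lt_iff (zpow_pos natCast_prime_pos _)]
  exact forall_congr' fun i => norm_le_pow_iff_norm_lt_pow_add_one (x i) β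

theorem exists_pi_norm_eq_zpow {x : ι → ℚ_[p]} (hx : x ≠ 0) : ∃ β : ℤ, ‖x‖ = (p : ℝ) ^ β := by
  obtain ⟨β, hle, hlt⟩ := exists_mem_Ico_zpow (norm_pos_iff.2 hx) (one_lt_natCast_prime (p := p))
  exact ⟨β, ((pi_norm_le_zpow_iff_lt x β).2 hlt).antisymm hle⟩

theorem exists_zpow_le_and_closedBall_eq {r : ℝ} (hr : 0 < r) :
    ∃ β : ℤ, (p : ℝ) ^ β ≤ r ∧ closedBall (0 : ι → ℚ_[p]) r = closedBall 0 ((p : ℝ) ^ β) := by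
  obtain ⟨β, hle, hlt⟩ := exists_mem_Ico_zpow hr (one_lt_natCast_prime (p := p))
  refine ⟨β, hle, Subset.antisymm (fun x hx => ?_) (closedBall_subset_closedBall hle)⟩
  rw [mem_closedBall_zero_iff] at hx ⊢
  exact (pi_norm_le_zpow_iff_lt x β).2 (hx.trans_lt hlt)

noncomputable def digitVec (v : ι → Fin p) : ι → ℚ_[p] := fun i => ((v i : ℕ) : ℚ_[p])

theorem closedBall_one_eq_iUnion_digitVec :
    closedBall (0 : ι → ℚ_[p]) 1 = ⋃ v : ι → Fin p, closedBall (digitVec v) (p : ℝ)⁻¹ := by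
  ext x
  rw [mem_closedBall_zero_iff]
  simp only [mem_iUnion, mem_closedBall, dist_eq_norm]
  constructor
  · intro hx
    choose v hv using fun i => exists_fin_norm_sub_lt_one ((norm_le_pi_norm x i).trans hx)
    refine ⟨v, ?_⟩
    rw [← zpow_neg_one, pi_norm_le_zpow_iff_lt, neg_add_cancel, zpow_zero, pi_norm_lt_iff one_pos]
    exact hv
  · rintro ⟨v, hv⟩
    have hdigits : ‖digitVec v‖ ≤ 1 := (pi_norm_le_iff_of_nonneg zero_le_one).2 fun i =>
      IsUltrametricDist.norm_natCast_le_one ℚ_[p] _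
    calc ‖x‖ = ‖(x - digitVec v) + digitVec v‖ := by rw [sub_add_cancel]
      _ ≤ max ‖x - digitVec v‖ ‖digitVec v‖ := IsUltrametricDist.norm_add_le_max _ _
      _ ≤ 1 := max_le (hv.trans (inv_le_one_of_one_le₀ one_lt_natCast_prime.le)) hdigits

theorem pairwise_disjoint_closedBall_digitVec :
    Pairwise (Function.onFun Disjoint fun v : ι → Fin p => closedBall (digitVec v) (p : ℝ)⁻¹) := by
  intro v w hvw
  refine (IsUltrametricDist.closedBall_eq_or_disjoint _ _ _).resolve_left fun heq => hvw ?_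
  have hw : digitVec w ∈ closedBall (digitVec v) (p : ℝ)⁻¹ :=
    heq ▸ mem_closedBall_self (by positivity)
  rw [mem_closedBall, dist_eq_norm] at hw
  have hlt : ‖digitVec w - digitVec v‖ < 1 :=
    hw.trans_lt (inv_lt_one_of_one_lt₀ one_lt_natCast_prime)
  funext i
  exact (eq_of_norm_natCast_sub_lt_one ((norm_le_pi_norm _ i).trans_lt hlt)).symm

end Padic

open Padic

section Measure

variable (p) (n : ℕ)

instance : (μp p n).IsAddHaarMeasure := Measure.isAddHaarMeasure_addHaarMeasure _

theorem μp_closedBall_norm (c : ℚ_[p]) (hc : c ≠ 0) :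
    μp p n (closedBall 0 ‖c‖) = p ^ n * μp p n (closedBall 0 (‖c‖ * (p : ℝ)⁻¹)) := by
  rw [← mul_one ‖c‖, ← smul_zero c, ← smul_closedBall c 0 zero_le_one,
    closedBall_one_eq_iUnion_digitVec, smul_set_iUnion, measure_iUnion, tsum_fintype]
  · simp [smul_closedBall c _ (inv_nonneg.2 natCast_prime_pos.le),
      Measure.addHaar_closedBall_center]
  · intro v w hvw
    simpa only [← Set.image_smul] using (Set.disjoint_image_iff (smul_right_injective _ hc)).2
      (pairwise_disjoint_closedBall_digitVec hvw)
  · exact fun v => measurableSet_closedBall.const_smul₀ c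

theorem μp_closedBall_one : μp p n (closedBall 0 1) = 1 := Measure.addHaarMeasure_self

theorem measureReal_closedBall_zpow (γ : ℤ) :
    (μp p n).real (closedBall 0 ((p : ℝ) ^ γ)) = ((p : ℝ) ^ γ) ^ n := by
  have hp : (p : ℝ) ≠ 0 := natCast_prime_pos.ne'
  have hstep (k : ℤ) : (μp p n).real (closedBall 0 ((p : ℝ) ^ (k + 1))) =
      p ^ n * (μp p n).real (closedBall 0 ((p : ℝ) ^ k)) := by
    have h := μp_closedBall_norm p n ((p : ℚ_[p]) ^ (-(k + 1)))
      (zpow_ne_zero _ (Nat.cast_ne_zero.2 (Fact.out : p.Prime).ne_zero))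
    rw [Padic.norm_p_zpow, neg_neg, zpow_add_one₀ hp, mul_inv_cancel_right₀ hp,
      ← zpow_add_one₀ hp] at h
    rw [measureReal_def, measureReal_def, h, ENNReal.toReal_mul, ENNReal.toReal_pow,
      ENNReal.toReal_natCast]
  induction γ using Int.induction_on with
  | zero => simp [measureReal_def, μp_closedBall_one]
  | succ k ih => rw [hstep, ih, zpow_add_one₀ hp]; ring
  | pred k ih =>
    have h := hstep (-k - 1)
    rw [sub_add_cancel, ih] at h
    have h' : (μp p n).real (closedBall 0 ((p : ℝ) ^ (-(k : ℤ) - 1))) =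
        ((p : ℝ) ^ (-(k : ℤ))) ^ n / (p : ℝ) ^ n :=
      eq_div_of_mul_eq (pow_ne_zero n hp) (by rw [mul_comm, h])
    rw [h', zpow_sub_one₀ hp, mul_pow, inv_pow, div_eq_mul_inv]

end Measure

section Measure

variable (p) {n : ℕ}

theorem μp_closedBall_le {r : ℝ} (hr : 0 < r) :
    μp p n (closedBall 0 r) ≤ ENNReal.ofReal (r ^ n) := by
  obtain ⟨β, hβr, hball⟩ := exists_zpow_le_and_closedBall_eq (ι := Fin n) (p := p) hr
  rw [hball, ← ofReal_measureReal (measure_closedBall_lt_top (x := 0)).ne,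
    measureReal_closedBall_zpow]
  gcongr

theorem measureReal_closedBall_norm {x : Fin n → ℚ_[p]} (hx : x ≠ 0) :
    (μp p n).real (closedBall 0 ‖x‖) = ‖x‖ ^ n := by
  obtain ⟨β, hβ⟩ := exists_pi_norm_eq_zpow hx
  rw [hβ, measureReal_closedBall_zpow]

theorem μp_singleton_zero (hn : n ≠ 0) : μp p n {0} = 0 := by
  have : Nonempty (Fin n) := ⟨⟨0, Nat.pos_of_ne_zero hn⟩⟩
  have := Module.punctured_nhds_neBot ℚ_[p] (Fin n → ℚ_[p]) 0
  exact measure_singleton 0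

end Measure

theorem setOf_norm_le_eq_closedBall {E : Type*} [SeminormedAddGroup E] (r : ℝ) :
    {y : E | ‖y‖ ≤ r} = closedBall 0 r := by
  ext; simp

section Hardy

variable (p) {n : ℕ}

theorem f₀_eq_indicator : f₀ p n = (closedBall 0 1).indicator 1 := by
  rw [f₀, setOf_norm_le_eq_closedBall]; rfl

-- `Real.rpow` gives `0 ^ (-n) = 0`, whatever the value of the integral.
theorem Hop_f₀_zero (hn : n ≠ 0) : Hop p n 0 (f₀ p n) 0 = 0 := by
  rw [Hop, norm_zero, Real.zero_rpow (by simpa using hn), zero_mul]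

theorem Hop_f₀_of_ne_zero {x : Fin n → ℚ_[p]} (hx : x ≠ 0) :
    Hop p n 0 (f₀ p n) x = max ‖x‖ 1 ^ (-(n : ℝ)) := by
  have hinter : closedBall (0 : Fin n → ℚ_[p]) ‖x‖ ∩ closedBall 0 1 =
      closedBall 0 (min ‖x‖ 1) := by
    ext; simp
  rw [Hop, setOf_norm_le_eq_closedBall, f₀_eq_indicator,
    setIntegral_indicator measurableSet_closedBall, hinter, Pi.one_def, setIntegral_const,
    smul_eq_mul, mul_one, zero_sub, Real.rpow_neg (norm_nonneg x), Real.rpow_natCast]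
  rcases le_total ‖x‖ 1 with h | h
  · rw [min_eq_left h, max_eq_right h, measureReal_closedBall_norm p hx, Real.one_rpow,
      inv_mul_cancel₀ (pow_ne_zero n (norm_ne_zero_iff.2 hx))]
  · rw [min_eq_right h, max_eq_left h, measureReal_def, μp_closedBall_one, ENNReal.toReal_one,
      mul_one, Real.rpow_neg (norm_nonneg x), Real.rpow_natCast]

theorem abs_Hop_f₀_le_one (hn : n ≠ 0) (x : Fin n → ℚ_[p]) : |Hop p n 0 (f₀ p n) x| ≤ 1 := by
  rcases eq_or_ne x 0 with rfl | hx
  · simp [Hop_f₀_zero p hn]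
  rw [Hop_f₀_of_ne_zero p hx, abs_of_nonneg (by positivity)]
  exact Real.rpow_le_one_of_one_le_of_nonpos (le_max_right _ _) (by simp)

theorem norm_lt_of_lt_abs_Hop_f₀ (hn : n ≠ 0) {t : ℝ} (ht : 0 < t) {x : Fin n → ℚ_[p]}
    (hx : t < |Hop p n 0 (f₀ p n) x|) : ‖x‖ < t⁻¹ ^ (n : ℝ)⁻¹ := by
  rcases eq_or_ne x 0 with rfl | hx0
  · rw [norm_zero]; positivity
  rw [Hop_f₀_of_ne_zero p hx0, abs_of_nonneg (by positivity)] at hx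
  have hxpos : 0 < ‖x‖ := norm_pos_iff.2 hx0
  rw [Real.lt_rpow_inv_iff_of_pos (norm_nonneg x) (inv_nonneg.2 ht.le) (by positivity),
    lt_inv_comm₀ (by positivity) ht, ← Real.rpow_neg (norm_nonneg x)]
  exact hx.trans_le (Real.rpow_le_rpow_of_nonpos hxpos (le_max_left _ _) (by simp))

theorem μp_setOf_lt_abs_Hop_f₀_le (hn : n ≠ 0) (γ : ℤ) {t : ℝ} (ht : 0 < t) :
    μp p n {x | ‖x‖ ≤ (p : ℝ) ^ γ ∧ t < |Hop p n 0 (f₀ p n) x|} ≤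
      ENNReal.ofReal (min (((p : ℝ) ^ γ) ^ n) t⁻¹) := by
  calc _ ≤ μp p n (closedBall 0 ((p : ℝ) ^ γ) ∩ closedBall 0 (t⁻¹ ^ (n : ℝ)⁻¹)) :=
        measure_mono fun x hx => ⟨mem_closedBall_zero_iff.2 hx.1,
          mem_closedBall_zero_iff.2 (norm_lt_of_lt_abs_Hop_f₀ p hn ht hx.2).le⟩
    _ ≤ min (μp p n (closedBall 0 ((p : ℝ) ^ γ))) (μp p n (closedBall 0 (t⁻¹ ^ (n : ℝ)⁻¹))) :=
        le_min (measure_mono inter_subset_left) (measure_mono inter_subset_right)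
    _ ≤ _ := by
        rw [ENNReal.ofReal_min]
        exact min_le_min (μp_closedBall_le p (zpow_pos natCast_prime_pos γ))
          ((μp_closedBall_le p (by positivity)).trans_eq
            (by rw [Real.rpow_inv_natCast_pow (inv_nonneg.2 ht.le) hn]))

theorem lintegral_ofReal_abs_f₀_rpow {q : ℝ} (hq : q ≠ 0) (s : Set (Fin n → ℚ_[p])) :
    ∫⁻ x in s, ENNReal.ofReal (|f₀ p n x| ^ q) ∂(μp p n) = μp p n (closedBall 0 1 ∩ s) := by
  have h : (fun x => ENNReal.ofReal (|f₀ p n x| ^ q)) = (closedBall 0 1).indicator 1 := by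
    funext x
    by_cases hx : x ∈ closedBall (0 : Fin n → ℚ_[p]) 1 <;> simp [f₀_eq_indicator, hx, hq]
  rw [h, lintegral_indicator_one measurableSet_closedBall,
    Measure.restrict_apply measurableSet_closedBall]

end Hardy

theorem Real.rpow_natCast_mul_intCast {x : ℝ} (hx : 0 ≤ x) (n : ℕ) (γ : ℤ) :
    x ^ ((n : ℝ) * (γ : ℝ)) = (x ^ γ) ^ n := by
  rw [mul_comm, Real.rpow_mul hx, Real.rpow_intCast, Real.rpow_natCast]

theorem mul_min_inv_rpow_le {t M a l : ℝ} (ht : 0 < t) (ht1 : t ≤ 1) (hM : 0 < M)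
    (hl : -1 ≤ l) (hl0 : l ≤ 0) (hla : 0 ≤ l + a) (ha : a ≠ 0) :
    t * min M t⁻¹ ^ a ≤ M ^ (l + a) := by
  set m := min M t⁻¹
  have hm : 0 ≤ m := le_min hM.le (inv_nonneg.2 ht.le)
  calc t * m ^ a = t * (m ^ (-l) * m ^ (l + a)) := by
        rw [← Real.rpow_add' hm (by simpa using ha), neg_add_cancel_left]
    _ ≤ t * (t⁻¹ ^ (-l) * M ^ (l + a)) := by
        gcongr
        · linarith
        · exact min_le_right M t⁻¹
        · exact min_le_left M t⁻¹
    _ = t ^ (1 + l) * M ^ (l + a) := by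
        rw [Real.inv_rpow ht.le, ← Real.rpow_neg ht.le, neg_neg, ← mul_assoc, Real.rpow_add ht,
          Real.rpow_one]
    _ ≤ M ^ (l + a) :=
        mul_le_of_le_one_left (by positivity) (Real.rpow_le_one ht.le ht1 (by linarith))

theorem rpow_neg_mul_min_one_le_one {M a : ℝ} (hM : 0 < M) (ha0 : 0 ≤ a) (ha1 : a ≤ 1) :
    M ^ (-a) * min M 1 ≤ 1 := by
  rcases le_total M 1 with h | h
  · rw [min_eq_left h, ← Real.rpow_add_one hM.ne']
    exact Real.rpow_le_one hM.le h (by linarith)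
  · rw [min_eq_right h, mul_one]
    exact Real.rpow_le_one_of_one_le_of_nonpos h (by linarith)

section Norms

variable (p) {n : ℕ} {q l : ℝ}

theorem wmorrey_Hop_f₀_le_one (hn : n ≠ 0) (hq : 0 < q) (hl : -1 ≤ l) (hlq : -(1 / q) ≤ l)
    (hl0 : l ≤ 0) : wmorrey p n q l (Hop p n 0 (f₀ p n)) ≤ 1 := by
  refine iSup_le fun γ => ?_
  have hM : 0 < ((p : ℝ) ^ γ) ^ n := pow_pos (zpow_pos natCast_prime_pos γ) n
  rw [Real.rpow_natCast_mul_intCast (Nat.cast_nonneg p)]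
  set M := ((p : ℝ) ^ γ) ^ n
  suffices h : ∀ t, 0 < t → ENNReal.ofReal t * μp p n {x | ‖x‖ ≤ (p : ℝ) ^ γ ∧
      t < |Hop p n 0 (f₀ p n) x|} ^ (1 / q) ≤ ENNReal.ofReal (M ^ (l + 1 / q)) by
    calc _ ≤ ENNReal.ofReal (M ^ (-(l + 1 / q))) * ENNReal.ofReal (M ^ (l + 1 / q)) :=
          mul_le_mul_right (iSup₂_le h) _
      _ = 1 := by
          rw [← ENNReal.ofReal_mul (by positivity), ← Real.rpow_add hM, neg_add_cancel,
            Real.rpow_zero, ENNReal.ofReal_one]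
  intro t ht
  rcases lt_or_ge t 1 with ht1 | ht1
  · calc _ ≤ ENNReal.ofReal t * ENNReal.ofReal (min M t⁻¹) ^ (1 / q) := by
          gcongr
          exact μp_setOf_lt_abs_Hop_f₀_le p hn γ ht
      _ = ENNReal.ofReal (t * min M t⁻¹ ^ (1 / q)) := by
          rw [ENNReal.ofReal_rpow_of_nonneg (by positivity) (by positivity),
            ENNReal.ofReal_mul ht.le]
      _ ≤ _ := ENNReal.ofReal_le_ofReal (mul_min_inv_rpow_le ht ht1.le hM hl hl0 (by linarith)
          (by positivity))
  · have hempty : {x : Fin n → ℚ_[p] | ‖x‖ ≤ (p : ℝ) ^ γ ∧ t < |Hop p n 0 (f₀ p n) x|} = ∅ :=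
      eq_empty_of_forall_notMem fun x hx => (abs_Hop_f₀_le_one p hn x).not_gt (ht1.trans_lt hx.2)
    rw [hempty, measure_empty, ENNReal.zero_rpow_of_pos (by positivity), mul_zero]
    exact zero_le

theorem one_le_wmorrey_Hop_f₀ (hn : n ≠ 0) : 1 ≤ wmorrey p n q l (Hop p n 0 (f₀ p n)) := by
  refine le_trans ?_ (le_iSup _ 0)
  have hE : ∀ t, 0 < t → t < 1 →
      μp p n {x | ‖x‖ ≤ (p : ℝ) ^ (0 : ℤ) ∧ t < |Hop p n 0 (f₀ p n) x|} = 1 := by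
    intro t ht ht1
    refine le_antisymm ((measure_mono fun x hx => ?_).trans (μp_closedBall_one p n).le) ?_
    · simpa using hx.1
    calc 1 = μp p n (closedBall 0 1 \ {0}) := by
          rw [measure_sdiff_null (μp_singleton_zero p hn), μp_closedBall_one]
      _ ≤ _ := measure_mono fun x ⟨hx1, hx0⟩ => by
          rw [mem_closedBall_zero_iff] at hx1
          refine ⟨by simpa using hx1, ?_⟩
          rw [Hop_f₀_of_ne_zero p hx0, max_eq_right hx1, Real.one_rpow, abs_one]
          exact ht1
  simp only [Int.cast_zero, mul_zero, Real.rpow_zero, Real.one_rpow, ENNReal.ofReal_one, one_mul]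
  refine ENNReal.le_of_forall_nnreal_lt fun r hr => ?_
  rcases eq_or_ne r 0 with rfl | hr0
  · simp
  have ht : 0 < (r : ℝ) := by positivity
  have ht1 : (r : ℝ) < 1 := by exact_mod_cast hr
  refine le_iSup₂_of_le (r : ℝ) ht (le_of_eq ?_)
  rw [hE _ ht ht1, ENNReal.one_rpow, mul_one, ENNReal.ofReal_coe_nnreal]

theorem morrey_f₀_le_one (hq : 0 < q) (hlq : -(1 / q) ≤ l) (hl0 : l ≤ 0) :
    morrey p n q l (f₀ p n) ≤ 1 := by
  refine iSup_le fun γ => ?_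
  have hM : 0 < ((p : ℝ) ^ γ) ^ n := pow_pos (zpow_pos natCast_prime_pos γ) n
  rw [Real.rpow_natCast_mul_intCast (Nat.cast_nonneg p), setOf_norm_le_eq_closedBall,
    lintegral_ofReal_abs_f₀_rpow p hq.ne']
  set M := ((p : ℝ) ^ γ) ^ n
  have hμ : μp p n (closedBall 0 1 ∩ closedBall 0 ((p : ℝ) ^ γ)) ≤ ENNReal.ofReal (min M 1) := by
    rw [ENNReal.ofReal_min, ENNReal.ofReal_one]
    exact le_min ((measure_mono inter_subset_right).trans
      (μp_closedBall_le p (zpow_pos natCast_prime_pos γ)))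
      ((measure_mono inter_subset_left).trans (μp_closedBall_one p n).le)
  have hlq' : -1 ≤ l * q := by
    have := mul_le_mul_of_nonneg_right hlq hq.le
    rwa [neg_mul, one_div, inv_mul_cancel₀ hq.ne'] at this
  refine ENNReal.rpow_le_one ?_ (by positivity)
  calc _ ≤ ENNReal.ofReal (M ^ (-(1 + l * q))) * ENNReal.ofReal (min M 1) := by gcongr
    _ = ENNReal.ofReal (M ^ (-(1 + l * q)) * min M 1) := (ENNReal.ofReal_mul (by positivity)).symm
    _ ≤ 1 := ENNReal.ofReal_le_one.2 (rpow_neg_mul_min_one_le_one hM (by linarith)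
        (by nlinarith))

theorem one_le_morrey_f₀ (hq : q ≠ 0) : 1 ≤ morrey p n q l (f₀ p n) := by
  refine le_trans ?_ (le_iSup _ 0)
  rw [setOf_norm_le_eq_closedBall, lintegral_ofReal_abs_f₀_rpow p hq]
  simp [μp_closedBall_one]

end Norms

/-- Sharpness for the `p`-adic Hardy operator on central Morrey spaces:
`‖H^p f₀‖_{WḂ^{q,λ}} = 1 = ‖f₀‖_{Ḃ^{q,λ}}`; hence the operator norm of
`H^p : Ḃ^{q,λ} → WḂ^{q,λ}` is exactly `1`. -/
theorem hardy_morrey_sharp (p : ℕ) [Fact p.Prime] (n : ℕ) (hn : 0 < n)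
    (q l : ℝ) (hq : 1 ≤ q) (hl1 : -(1 / q) ≤ l) (hl2 : l < 0) :
    wmorrey p n q l (Hop p n 0 (f₀ p n)) = 1 ∧ morrey p n q l (f₀ p n) = 1 := by
  have hq0 : 0 < q := zero_lt_one.trans_le hq
  have hl : -1 ≤ l := le_trans (neg_le_neg ((div_le_one hq0).2 hq)) hl1
  exact ⟨(wmorrey_Hop_f₀_le_one p hn.ne' hq0 hl hl1 hl2.le).antisymm
      (one_le_wmorrey_Hop_f₀ p hn.ne'),
    (morrey_f₀_le_one p hq0 hl1 hl2.le).antisymm (one_le_morrey_f₀ p hq0.ne')⟩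
end
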